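/- arXiv:1512.02121 — 3 statements merged into one kernel-verified Lean document; each statement's English description precedes it below -/
import Mathlib

section
/- Let A be a unital associative real *-algebra such that left multiplication by any unitary element is an isometry for the Euclidean norm. Let v be a column vector in A^m, let b be a unitary element of A, let j < i, and set θ = -atan2(Re(b̄·v_i), Re(v_j)). If w = G(θ,b,i,j)·v where G(θ,b,i,j) is the generalized Givens rotation (identity except for entries cos θ at positions (j,j) and (i,i), -sin(θ)·b̄ at (j,i), and sin(θ)·b at (i,j)), then Re(w_j)² = Re(v_j)² + Re(b̄·v_i)². -/
open Matrix

/-- Two-argument arctangent: `atan2 y x = arg (x + i y)`. -/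
noncomputable def atan2 (y x : ℝ) : ℝ := Complex.arg ⟨x, y⟩

/-- Real part with respect to a basis whose first element is `1`. -/
noncomputable def ReB {d : ℕ} [NeZero d] {A : Type*} [Ring A] [Algebra ℝ A]
    (e : Module.Basis (Fin d) ℝ A) (a : A) : ℝ := e.repr a 0

/-- Euclidean norm with respect to a basis. -/
noncomputable def norm2B {d : ℕ} {A : Type*} [Ring A] [Algebra ℝ A]
    (e : Module.Basis (Fin d) ℝ A) (a : A) : ℝ := Real.sqrt (∑ k, (e.repr a k) ^ 2)

/-- The generalized Givens rotation `G(θ,b,i,j)`: identity except entries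
`cos θ` at `(j,j)` and `(i,i)`, `-sin θ • star b` at `(j,i)`, `sin θ • b` at `(i,j)`. -/
noncomputable def givens {A : Type*} [Ring A] [Algebra ℝ A] [StarRing A] {m : ℕ}
    (θ : ℝ) (b : A) (i j : Fin m) : Matrix (Fin m) (Fin m) A :=
  fun k l =>
    if k = j ∧ l = j then (Real.cos θ) • (1 : A)
    else if k = i ∧ l = i then (Real.cos θ) • (1 : A)
    else if k = j ∧ l = i then (-Real.sin θ) • star b
    else if k = i ∧ l = j then (Real.sin θ) • b
    else if k = l then 1 else 0

theorem givens_rotation_real_part {d m : ℕ} [NeZero d] {A : Type*}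
    [Ring A] [Algebra ℝ A] [StarRing A] [StarModule ℝ A]
    (e : Module.Basis (Fin d) ℝ A) (he : e 0 = 1)
    (hiso : ∀ (u a : A), star u * u = 1 → norm2B e (u * a) = norm2B e a)
    (v : Fin m → A) (b : A) (hb : star b * b = 1)
    (i j : Fin m) (hij : j < i)
    (θ : ℝ) (hθ : θ = - atan2 (ReB e (star b * v i)) (ReB e (v j)))
    (w : Fin m → A) (hw : w = (givens θ b i j).mulVec v) :
    (ReB e (w j)) ^ 2 = (ReB e (v j)) ^ 2 + (ReB e (star b * v i)) ^ 2 := by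
  have hji : j ≠ i := hij.ne
  have hkey : w j = (Real.cos θ) • v j + (-Real.sin θ) • (star b * v i) := by
    subst hw
    have hterm : ∀ l, givens θ b i j j l * v l =
        (if l = j then (Real.cos θ) • v j else 0) +
        (if l = i then (-Real.sin θ) • (star b * v i) else 0) := by
      intro l
      simp only [givens]
      by_cases h1 : l = j
      · subst h1; simp [hji, smul_mul_assoc]
      · by_cases h2 : l = i
        · subst h2; simp [hji, h1, smul_mul_assoc]
        · simp [h1, h2, Ne.symm h1]
    simp only [mulVec, dotProduct, hterm, Finset.sum_add_distrib,
      Finset.sum_ite_eq', Finset.mem_univ, if_true]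
  set x := ReB e (v j) with hx
  set y := ReB e (star b * v i) with hy
  have hRe : ReB e (w j) = Real.cos θ * x + (-Real.sin θ) * y := by
    rw [hkey]; simp [ReB, map_add, _root_.map_smul, hx, hy]
  rw [hRe]
  by_cases hz : (⟨x, y⟩ : ℂ) = 0
  · have hx0 : x = 0 := congrArg Complex.re hz
    have hy0 : y = 0 := congrArg Complex.im hz
    simp [hx0, hy0]
  · set z : ℂ := ⟨x, y⟩ with hzdef
    have hr : ‖z‖ ≠ 0 := by simpa using hz
    have hcos : Real.cos θ = x / ‖z‖ := by
      rw [hθ, atan2, Real.cos_neg]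
      simpa [hzdef] using Complex.cos_arg hz
    have hsin : Real.sin θ = -(y / ‖z‖) := by
      rw [hθ, atan2, Real.sin_neg]
      simpa [hzdef] using Complex.sin_arg z
    have hsq : ‖z‖ ^ 2 = x ^ 2 + y ^ 2 := by
      rw [Complex.sq_norm]; simp [Complex.normSq, hzdef, sq]
    rw [hcos, hsin]
    field_simp
    ring_nf
    nlinarith [hsq, sq_nonneg ‖z‖]
end

section
/- Let A and A′ be d-dimensional real *-algebras with unitary bases {e₁,...,e_d} and {e′₁,...,e′_d}. Then the set {e_i ⊕ e′_i, e_i ⊕ (-e′_i) : 1 ≤ i ≤ d} (each rescaled appropriately, with Re(a ⊕ a′) = ½(Re(a)+Re(a′))) is a unitary basis of the direct sum *-algebra A ⊕ A′. -/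
/-- If `{e_i}` and `{e'_i}` are unitary bases of the `d`-dimensional real
*-algebras `A` and `A'`, then the family `{e_i ⊕ e'_i, e_i ⊕ (-e'_i)}` is a
unitary basis of the direct sum *-algebra `A ⊕ A'`, where
`Re(a ⊕ a') = ½(Re a + Re a')`. -/
theorem directSum_unitary_basis {d : ℕ} {A A' : Type*}
    [Ring A] [Algebra ℝ A] [StarRing A]
    [Ring A'] [Algebra ℝ A'] [StarRing A']
    (Re : A →ₗ[ℝ] ℝ) (Re' : A' →ₗ[ℝ] ℝ)
    (e : Module.Basis (Fin d) ℝ A) (e' : Module.Basis (Fin d) ℝ A')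
    (hu : ∀ i, star (e i) * e i = 1) (hu' : ∀ i, star (e' i) * e' i = 1)
    (ho : ∀ i j, Re (star (e i) * e j) = if i = j then 1 else 0)
    (ho' : ∀ i j, Re' (star (e' i) * e' j) = if i = j then 1 else 0)
    (ReP : A × A' → ℝ) (hReP : ∀ p : A × A', ReP p = (Re p.1 + Re' p.2) / 2)
    (v : Fin d × Bool → A × A')
    (hv : ∀ p, v p = (e p.1, if p.2 then e' p.1 else -e' p.1)) :
    (∃ B : Module.Basis (Fin d × Bool) ℝ (A × A'), ∀ p, B p = v p) ∧
    (∀ p, star (v p) * v p = 1) ∧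
    (∀ p q, ReP (star (v p) * v q) = if p = q then 1 else 0) := by
  -- orthonormality
  have key : ∀ p q, ReP (star (v p) * v q) = if p = q then 1 else 0 := by
    rintro ⟨i, b⟩ ⟨j, c⟩
    rw [hv, hv, hReP]
    simp only [Prod.mk.injEq, Prod.fst, Prod.snd]
    have hstar : star ((e i, if b then e' i else -e' i) : A × A')
        = (star (e i), star (if b then e' i else -e' i)) := rfl
    rw [hstar]
    have hmul : ((star (e i), star (if b then e' i else -e' i)) : A × A')
        * (e j, if c then e' j else -e' j)
        = (star (e i) * e j,
           star (if b then e' i else -e' i) * (if c then e' j else -e' j)) := rfl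
    rw [hmul]
    simp only []
    cases b <;> cases c <;>
      simp [ho, ho', star_neg, neg_mul, mul_neg, Prod.ext_iff] <;>
      by_cases hij : i = j <;> simp [hij] <;> ring
  have unit : ∀ p, star (v p) * v p = 1 := by
    rintro ⟨i, b⟩
    rw [hv]
    cases b <;>
      simp [Prod.ext_iff, Prod.mul_def, hu i, hu' i, star_neg, neg_mul_neg] <;>
      constructor <;> rfl
  refine ⟨?_, unit, key⟩
  -- linear map version of ReP
  have : FiniteDimensional ℝ A := Module.Finite.of_basis e
  have : FiniteDimensional ℝ A' := Module.Finite.of_basis e'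
  set RePL : (A × A') →ₗ[ℝ] ℝ :=
    (1/2 : ℝ) • (Re.comp (LinearMap.fst ℝ A A') + Re'.comp (LinearMap.snd ℝ A A')) with hRePL
  have hRePeq : ∀ x, ReP x = RePL x := by
    intro x
    rw [hReP, hRePL]
    simp [LinearMap.smul_apply]
    ring
  have hli : LinearIndependent ℝ v := by
    rw [linearIndependent_iff']
    intro s g hsum p hp
    have h1 : RePL (star (v p) * (∑ q ∈ s, g q • v q)) = 0 := by
      rw [hsum, mul_zero, map_zero]
    rw [Finset.mul_sum] at h1
    have h2 : ∀ q ∈ s, star (v p) * (g q • v q) = g q • (star (v p) * v q) := by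
      intro q _; rw [mul_smul_comm]
    rw [Finset.sum_congr rfl h2, map_sum] at h1
    have h3 : ∀ q ∈ s, RePL (g q • (star (v p) * v q))
        = if p = q then g q else 0 := by
      intro q _
      rw [map_smul, smul_eq_mul, ← hRePeq, key]
      by_cases h : p = q <;> simp [h]
    rw [Finset.sum_congr rfl h3, Finset.sum_ite_eq s p g] at h1
    simpa [hp] using h1
  have hcard : Fintype.card (Fin d × Bool) = Module.finrank ℝ (A × A') := by
    rw [Module.finrank_prod, Module.finrank_eq_card_basis e,
      Module.finrank_eq_card_basis e']
    simp [Fintype.card_prod]; omega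
  have hspan := hli.span_eq_top_of_card_eq_finrank' hcard
  exact ⟨Module.Basis.mk hli hspan.ge, fun p => Module.Basis.mk_apply hli hspan.ge p⟩
end

section
/- In a real *-algebra A with ‖·‖₂ from a basis with e₁ = 1, if β : A → U(A) satisfies |Re(β(a)̄·a)| = ‖a‖₂ for all nonzero a, then every nonzero element of A is invertible, i.e., A is a division algebra. (Consequently, by Frobenius' theorem, a finite-dimensional A admitting a (‖·‖₂,1)-decent β must be isomorphic to R, C, or H.) -/
/-- If `β : A → U(A)` satisfies `|Re(β(a)̄·a)| = ‖a‖₂` for all nonzero `a`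
(where `Re` and `‖·‖₂` come from a basis with first element `1`, and left
multiplication by unitary elements is a `‖·‖₂`-isometry), then every nonzero
element of `A` is invertible, i.e. `A` is a division algebra. -/
theorem equality_implies_division_algebra {d : ℕ} [NeZero d] {A : Type*}
    [Ring A] [Algebra ℝ A] [StarRing A]
    (e : Module.Basis (Fin d) ℝ A) (he : e 0 = 1)
    (hiso : ∀ (b a : A), star b * b = 1 → b * star b = 1 →
      norm2B e (b * a) = norm2B e a)
    (β : A → A)
    (hβu : ∀ a, star (β a) * β a = 1 ∧ β a * star (β a) = 1)
    (hβ : ∀ a : A, a ≠ 0 → |e.repr (star (β a) * a) 0| = norm2B e a) :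
    ∀ a : A, a ≠ 0 → IsUnit a := by
  intro a ha
  obtain ⟨h1, h2⟩ := hβu a
  set c := star (β a) * a with hc
  have hiso' : norm2B e c = norm2B e a := by
    apply hiso
    · simpa using h2
    · simpa using h1
  have habs : |e.repr c 0| = norm2B e c := (hβ a ha).trans hiso'.symm
  have hsumnn : (0:ℝ) ≤ ∑ k, (e.repr c k)^2 :=
    Finset.sum_nonneg fun k _ => sq_nonneg _
  have hsum : (e.repr c 0)^2 = ∑ k, (e.repr c k)^2 := by
    have := congrArg (·^2) habs
    simpa [norm2B, sq_abs, Real.sq_sqrt hsumnn] using this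
  have hzero : ∀ k, k ≠ 0 → e.repr c k = 0 := by
    intro k hk
    have htot := Finset.sum_erase_add Finset.univ (fun j => (e.repr c j)^2)
      (Finset.mem_univ (0 : Fin d))
    have hs : ∑ j ∈ Finset.univ.erase 0, (e.repr c j)^2 = 0 := by
      linarith [hsum]
    have := (Finset.sum_eq_zero_iff_of_nonneg (fun j _ => sq_nonneg _)).1 hs k
      (Finset.mem_erase.2 ⟨hk, Finset.mem_univ k⟩)
    exact pow_eq_zero_iff (n := 2) (by norm_num) |>.1 this
  have hcr : c = e.repr c 0 • (1 : A) := by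
    conv_lhs => rw [← e.sum_repr c]
    rw [Finset.sum_eq_single 0]
    · rw [he]
    · intro k _ hk; rw [hzero k hk, zero_smul]
    · intro h; exact absurd (Finset.mem_univ 0) h
  set r := e.repr c 0 with hr0
  have har : a = r • β a := by
    calc a = (β a * star (β a)) * a := by rw [h2, one_mul]
    _ = β a * c := by rw [mul_assoc]
    _ = r • β a := by rw [hcr, mul_smul_comm, mul_one]
  have hr : r ≠ 0 := by
    intro h
    apply ha
    rw [har, h, zero_smul]
  refine ⟨⟨a, r⁻¹ • star (β a), ?_, ?_⟩, rfl⟩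
  · nth_rewrite 1 [har]; rw [smul_mul_smul_comm, h2, mul_inv_cancel₀ hr, one_smul]
  · nth_rewrite 2 [har]; rw [smul_mul_smul_comm, h1, inv_mul_cancel₀ hr, one_smul]
end
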